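/- Let a, b ∈ ℝ with a ≠ 0 and a² + b² = 1, and define f : ℝ × (0, π) → ℝ³ by f(ζ, ξ) = ( a cos ζ sin ξ, a sin ζ sin ξ, a (cos ξ + log (tan (ξ/2))) + b ζ ). Then for every (ζ, ξ) ∈ ℝ × (0, π), the cross product f_ζ(ζ, ξ) × f_ξ(ζ, ξ) equals 0 if and only if cos ξ = 0 (i.e. ξ = π/2). In other words, the singular set of Dini's surface is exactly the helix {ξ = π/2}. -/

import Mathlib

open Matrix

noncomputable section

/-- Partial derivative in the first (`ζ`) direction. -/
def pd1 (g : ℝ × ℝ → Fin 3 → ℝ) (p : ℝ × ℝ) : Fin 3 → ℝ := fderiv ℝ g p (1, 0)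

/-- Partial derivative in the second (`ξ`) direction. -/
def pd2 (g : ℝ × ℝ → Fin 3 → ℝ) (p : ℝ × ℝ) : Fin 3 → ℝ := fderiv ℝ g p (0, 1)

/-- Dini's surface `f(ζ, ξ) = (a cos ζ sin ξ, a sin ζ sin ξ,
a (cos ξ + log tan (ξ/2)) + b ζ)`. -/
def dini (a b : ℝ) : ℝ × ℝ → Fin 3 → ℝ := fun p =>
  ![a * Real.cos p.1 * Real.sin p.2,
    a * Real.sin p.1 * Real.sin p.2,
    a * (Real.cos p.2 + Real.log (Real.tan (p.2 / 2))) + b * p.1]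

/-! The partials of Dini's surface are `f_ζ = (-a sin ζ sin ξ, a cos ζ sin ξ, b)` and
`f_ξ = (a cos ζ cos ξ, a sin ζ cos ξ, a cos² ξ / sin ξ)`, whose cross product factors as
`a cos ξ • (a cos ζ cos ξ - b sin ζ, b cos ζ + a sin ζ cos ξ, -a sin ξ)`. For `a ≠ 0` the second
factor never vanishes where `sin ξ ≠ 0`, so the surface is singular exactly where `cos ξ = 0`. -/

open ContinuousLinearMap

lemma Real.hasDerivAt_log_tan_half {x : ℝ} (hx : Real.sin x ≠ 0) :
    HasDerivAt (fun t => Real.log (Real.tan (t / 2))) (1 / Real.sin x) x := by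
  have hsx : Real.sin x = 2 * Real.sin (x / 2) * Real.cos (x / 2) := by
    rw [← Real.sin_two_mul, mul_div_cancel₀ x two_ne_zero]
  have hsin : Real.sin (x / 2) ≠ 0 := fun h => hx (by simp [hsx, h])
  have hcos : Real.cos (x / 2) ≠ 0 := fun h => hx (by simp [hsx, h])
  have htan : Real.tan (x / 2) ≠ 0 := by
    rw [Real.tan_eq_sin_div_cos]
    exact div_ne_zero hsin hcos
  have h : HasDerivAt (fun t => Real.tan (t / 2)) (1 / Real.cos (x / 2) ^ 2 * (1 / 2)) x :=
    (Real.hasDerivAt_tan hcos).comp (h := fun t => t / 2) x ((hasDerivAt_id' x).div_const 2)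
  convert h.log htan using 1
  rw [Real.tan_eq_sin_div_cos, hsx]
  field_simp

section Partials

variable {n : ℕ} {g : ℝ × ℝ → Fin n → ℝ} {u v : Fin n → ℝ} {p : ℝ × ℝ}

lemma hasFDerivAt_of_coord_partials
    (h : ∀ i, HasFDerivAt (fun x => g x i) (u i • fst ℝ ℝ ℝ + v i • snd ℝ ℝ ℝ) p) :
    HasFDerivAt g ((fst ℝ ℝ ℝ).smulRight u + (snd ℝ ℝ ℝ).smulRight v) p := by
  refine hasFDerivAt_pi'.2 fun i => (h i).congr_fderiv ?_
  ext <;> simp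

end Partials

lemma pd1_pd2_of_coord_partials {g : ℝ × ℝ → Fin 3 → ℝ} {u v : Fin 3 → ℝ} {p : ℝ × ℝ}
    (h : ∀ i, HasFDerivAt (fun x => g x i) (u i • fst ℝ ℝ ℝ + v i • snd ℝ ℝ ℝ) p) :
    pd1 g p = u ∧ pd2 g p = v := by
  simp [pd1, pd2, (hasFDerivAt_of_coord_partials h).fderiv]

section Dini

variable (a b : ℝ) {p : ℝ × ℝ}

lemma pd1_pd2_dini (hp : Real.sin p.2 ≠ 0) :
    pd1 (dini a b) p = ![-(a * Real.sin p.1 * Real.sin p.2), a * Real.cos p.1 * Real.sin p.2, b] ∧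
    pd2 (dini a b) p = ![a * Real.cos p.1 * Real.cos p.2, a * Real.sin p.1 * Real.cos p.2,
      a * (Real.cos p.2 ^ 2 / Real.sin p.2)] := by
  have hfst : HasFDerivAt Prod.fst (fst ℝ ℝ ℝ) p := hasFDerivAt_fst
  have hsnd : HasFDerivAt Prod.snd (snd ℝ ℝ ℝ) p := hasFDerivAt_snd
  have hcos1 := (Real.hasDerivAt_cos p.1).comp_hasFDerivAt p hfst
  have hsin1 := (Real.hasDerivAt_sin p.1).comp_hasFDerivAt p hfst
  have hcos2 := (Real.hasDerivAt_cos p.2).comp_hasFDerivAt p hsnd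
  have hsin2 := (Real.hasDerivAt_sin p.2).comp_hasFDerivAt p hsnd
  have hlog2 := (Real.hasDerivAt_log_tan_half hp).comp_hasFDerivAt p hsnd
  apply pd1_pd2_of_coord_partials
  intro i
  fin_cases i
  · refine ((hcos1.const_mul a).mul hsin2).congr_fderiv ?_
    ext <;> simp [mul_comm, mul_left_comm]
  · refine ((hsin1.const_mul a).mul hsin2).congr_fderiv ?_
    ext <;> simp [mul_comm, mul_left_comm]
  · refine (((hcos2.add hlog2).const_mul a).add (hfst.const_mul b)).congr_fderiv ?_
    ext <;> simp [field, Real.cos_sq', neg_add_eq_sub]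

lemma pd1_cross_pd2_dini (hp : Real.sin p.2 ≠ 0) :
    pd1 (dini a b) p ⨯₃ pd2 (dini a b) p = (a * Real.cos p.2) •
      ![a * Real.cos p.1 * Real.cos p.2 - b * Real.sin p.1,
        b * Real.cos p.1 + a * Real.sin p.1 * Real.cos p.2, -(a * Real.sin p.2)] := by
  obtain ⟨h1, h2⟩ := pd1_pd2_dini a b hp
  rw [h1, h2, cross_apply, smul_vec3]
  simp only [cons_val, smul_eq_mul]
  refine vec3_eq ?_ ?_ ?_
  · field_simp
  · field_simp
    ring
  · linear_combination (-a ^ 2 * Real.sin p.2 * Real.cos p.2) * Real.sin_sq_add_cos_sq p.1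

lemma pd1_cross_pd2_dini_eq_zero_iff (ha : a ≠ 0) (hp : Real.sin p.2 ≠ 0) :
    pd1 (dini a b) p ⨯₃ pd2 (dini a b) p = 0 ↔ Real.cos p.2 = 0 := by
  rw [pd1_cross_pd2_dini a b hp, smul_eq_zero, mul_eq_zero, or_iff_right ha]
  refine or_iff_left fun h => mul_ne_zero ha hp ?_
  simpa using congrFun h 2

end Dini

lemma Real.cos_eq_zero_iff_of_mem_Ioo {x : ℝ} (hx : x ∈ Set.Ioo 0 Real.pi) :
    Real.cos x = 0 ↔ x = Real.pi / 2 := by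
  refine ⟨fun h => Real.injOn_cos (Set.Ioo_subset_Icc_self hx) ?_ ?_,
    fun h => h ▸ Real.cos_pi_div_two⟩
  · constructor <;> linarith [Real.pi_pos]
  · rw [h, Real.cos_pi_div_two]

theorem statement17_general (a b : ℝ) (ha : a ≠ 0)
    (f : ℝ × ℝ → Fin 3 → ℝ) (hf : f = dini a b) :
    ∀ p : ℝ × ℝ, p.2 ∈ Set.Ioo 0 Real.pi →
      ((pd1 f p ⨯₃ pd2 f p) = 0 ↔ Real.cos p.2 = 0) ∧
      (Real.cos p.2 = 0 ↔ p.2 = Real.pi / 2) := by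
  intro p hp
  subst hf
  exact ⟨pd1_cross_pd2_dini_eq_zero_iff a b ha (Real.sin_pos_of_pos_of_lt_pi hp.1 hp.2).ne',
    Real.cos_eq_zero_iff_of_mem_Ioo hp⟩

/-- for `a ≠ 0`, `a² + b² = 1`, the singular set of Dini's surface on
`ℝ × (0, π)` is exactly `{cos ξ = 0}`, i.e. the helix `{ξ = π/2}`. -/
theorem statement17 (a b : ℝ) (ha : a ≠ 0) (hab : a ^ 2 + b ^ 2 = 1)
    (f : ℝ × ℝ → Fin 3 → ℝ) (hf : f = dini a b) :
    ∀ p : ℝ × ℝ, p.2 ∈ Set.Ioo 0 Real.pi →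
      ((pd1 f p ⨯₃ pd2 f p) = 0 ↔ Real.cos p.2 = 0) ∧
      (Real.cos p.2 = 0 ↔ p.2 = Real.pi / 2) :=
  statement17_general a b ha f hf
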